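/- Let f : ℝⁿ → ℝ ∪ {+∞} be a proper convex function that is symmetric (f(x) = f(Px) for every n×n permutation matrix P), with associated spectral vector cone K_f and spectral matrix cone K_F. Then for every (t̄, v̄, X̄) ∈ ℝ × ℝ × Sⁿ, the Euclidean distance from (t̄, v̄, X̄) to K_F equals the Euclidean distance from (t̄, v̄, λ(X̄)) to K_f, where λ(X̄) ∈ ℝⁿ is the vector of eigenvalues of X̄ in nonincreasing order. -/

import Mathlib

/-!
Diagonalize `Xb = W diag(λ(Xb)) Wᵀ`. A point `(t, v, x)` of the vector cone yields the point
`(t, v, W diag(x↓) Wᵀ)` of the matrix cone, whose distance to `(tb, vb, Xb)` is that of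
`(t, v, x↓)` to `(tb, vb, λ(Xb))`; sorting `x` only brings it closer to the sorted `λ(Xb)`
(rearrangement inequality). Conversely, for `X = U diag(λ(X)) Uᵀ` the diagonal of `Wᵀ X W` is
`Q λ(X)` with `Q = (WᵀU) ⊙ (WᵀU)` doubly stochastic, so by Birkhoff's theorem and the convexity
and symmetry of `f` the point `(t, v, Q λ(X))` lies in the vector cone; discarding the
off-diagonal part of `Wᵀ (X - Xb) W` only decreases the distance. As the distances are
continuous, both infima may be taken before passing to the closures.
-/

open Matrix Finset

/-- The entries of `x` sorted in nonincreasing order. -/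
noncomputable def sortDesc {n : ℕ} (x : Fin n → ℝ) : Fin n → ℝ :=
  fun i => (x ∘ Tuple.sort x) i.rev

open Classical in
/-- The eigenvalues of a real symmetric matrix in nonincreasing order
(junk value `0` if the matrix is not symmetric). -/
noncomputable def eigsDesc {n : ℕ} (X : Matrix (Fin n) (Fin n) ℝ) : Fin n → ℝ :=
  if h : X.IsHermitian then sortDesc h.eigenvalues else 0

/-- The spectral vector cone `K_f` associated with the proper convex function with
value `f` on its domain `S` (and `+∞` outside `S`). -/
def vecCone {n : ℕ} (S : Set (Fin n → ℝ)) (f : (Fin n → ℝ) → ℝ) :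
    Set (ℝ × ℝ × (Fin n → ℝ)) :=
  closure {p | 0 < p.2.1 ∧ p.2.1⁻¹ • p.2.2 ∈ S ∧ p.2.1 * f (p.2.1⁻¹ • p.2.2) ≤ p.1}

/-- The spectral matrix cone `K_F`, where `F X = f (λ(X))` with `λ(X)` the eigenvalues
of the symmetric matrix `X` in nonincreasing order. -/
noncomputable def matCone {n : ℕ} (S : Set (Fin n → ℝ)) (f : (Fin n → ℝ) → ℝ) :
    Set (ℝ × ℝ × Matrix (Fin n) (Fin n) ℝ) :=
  closure {p | p.2.2.IsHermitian ∧ 0 < p.2.1 ∧ p.2.1⁻¹ • eigsDesc p.2.2 ∈ S ∧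
    p.2.1 * f (p.2.1⁻¹ • eigsDesc p.2.2) ≤ p.1}

section Infimum

variable {α β : Type*} [TopologicalSpace α] [TopologicalSpace β]

lemma csInf_image_closure {g : α → ℝ} (hg : Continuous g) (hbdd : BddBelow (Set.range g))
    (A : Set α) : sInf (g '' closure A) = sInf (g '' A) := by
  rcases A.eq_empty_or_nonempty with rfl | hA
  · simp
  have hbddA : BddBelow (g '' A) := hbdd.mono (Set.image_subset_range g A)
  refine le_antisymm (csInf_le_csInf (hbdd.mono (Set.image_subset_range g _)) (hA.image g)
    (Set.image_mono subset_closure)) (le_csInf (hA.closure.image g) ?_)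
  rintro _ ⟨a, ha, rfl⟩
  exact closure_minimal (fun _ hy => csInf_le hbddA hy) isClosed_Ici
    (image_closure_subset_closure_image hg ⟨a, ha, rfl⟩)

lemma csInf_closure_eq_of_forall_exists_le {g : α → ℝ} {h : β → ℝ} {A : Set α} {B : Set β}
    (hg : Continuous g) (hh : Continuous h) (hg₀ : BddBelow (Set.range g))
    (hh₀ : BddBelow (Set.range h)) (hAB : ∀ a ∈ A, ∃ b ∈ B, h b ≤ g a)
    (hBA : ∀ b ∈ B, ∃ a ∈ A, g a ≤ h b) :
    sInf {r | ∃ a ∈ closure A, r = g a} = sInf {r | ∃ b ∈ closure B, r = h b} := by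
  have himA : {r | ∃ a ∈ closure A, r = g a} = g '' closure A := by ext; simp [eq_comm]
  have himB : {r | ∃ b ∈ closure B, r = h b} = h '' closure B := by ext; simp [eq_comm]
  rw [himA, himB, csInf_image_closure hg hg₀, csInf_image_closure hh hh₀]
  refine csInf_eq_csInf_of_forall_exists_le ?_ ?_
  · rintro _ ⟨a, ha, rfl⟩
    obtain ⟨b, hb, hle⟩ := hAB a ha
    exact ⟨h b, ⟨b, hb, rfl⟩, hle⟩
  · rintro _ ⟨b, hb, rfl⟩
    obtain ⟨a, ha, hle⟩ := hBA b hb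
    exact ⟨g a, ⟨a, ha, rfl⟩, hle⟩

end Infimum

variable {n : ℕ}

lemma exists_perm_sortDesc (x : Fin n → ℝ) : ∃ σ : Equiv.Perm (Fin n), sortDesc x = x ∘ σ :=
  ⟨Fin.revPerm.trans (Tuple.sort x), rfl⟩

lemma antitone_sortDesc (x : Fin n → ℝ) : Antitone (sortDesc x) := fun _ _ hij =>
  Tuple.monotone_sort x (Fin.rev_le_rev.mpr hij)

lemma sortDesc_eq_of_perm {x d : Fin n → ℝ} (h : (List.ofFn x).Perm (List.ofFn d))
    (hd : Antitone d) : sortDesc x = d := by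
  obtain ⟨σ, hσ⟩ := exists_perm_sortDesc x
  refine List.ofFn_injective <|
    List.Perm.eq_of_sortedGE (antitone_sortDesc x).sortedGE_ofFn hd.sortedGE_ofFn ?_
  rw [hσ]
  exact (σ.ofFn_comp_perm x).trans h

lemma sum_sq_sortDesc_sub_le (x : Fin n → ℝ) {b : Fin n → ℝ} (hb : Antitone b) :
    ∑ i, (sortDesc x i - b i) ^ 2 ≤ ∑ i, (x i - b i) ^ 2 := by
  obtain ⟨σ, hσ⟩ := exists_perm_sortDesc x
  have hx : ∑ i, (x i - b i) ^ 2 = ∑ i, (sortDesc x i - b (σ i)) ^ 2 := by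
    rw [hσ]; exact (Equiv.sum_comp σ fun i => (x i - b i) ^ 2).symm
  have hb2 : ∑ i, b (σ i) ^ 2 = ∑ i, b i ^ 2 := Equiv.sum_comp σ fun i => b i ^ 2
  have hcross : ∑ i, sortDesc x i * b (σ i) ≤ ∑ i, sortDesc x i * b i :=
    ((antitone_sortDesc x).monovary hb).sum_mul_comp_perm_le_sum_mul
  rw [hx]
  simp only [sub_sq, sum_add_distrib, sum_sub_distrib, mul_assoc, ← mul_sum] at hb2 hcross ⊢
  linarith

lemma antitone_eigsDesc (X : Matrix (Fin n) (Fin n) ℝ) : Antitone (eigsDesc X) := by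
  unfold eigsDesc
  split_ifs
  exacts [antitone_sortDesc _, antitone_const]

lemma sum_sq_eq_trace_mul_star (A : Matrix (Fin n) (Fin n) ℝ) :
    ∑ i, ∑ j, A i j ^ 2 = trace (A * star A) := by
  simp [trace, mul_apply, sq]

lemma sum_sq_conj_unitary {W : Matrix (Fin n) (Fin n) ℝ} (hW : W ∈ unitaryGroup (Fin n) ℝ)
    (A : Matrix (Fin n) (Fin n) ℝ) :
    ∑ i, ∑ j, (W * A * star W) i j ^ 2 = ∑ i, ∑ j, A i j ^ 2 := by
  have hW' := mem_unitaryGroup_iff'.mp hW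
  rw [sum_sq_eq_trace_mul_star, sum_sq_eq_trace_mul_star, star_mul, star_mul, star_star]
  simp only [Matrix.mul_assoc]
  rw [← Matrix.mul_assoc (star W) W, hW', Matrix.one_mul, trace_mul_comm]
  simp only [Matrix.mul_assoc]
  rw [hW', Matrix.mul_one]

lemma sum_sq_diagonal (d : Fin n → ℝ) : ∑ i, ∑ j, diagonal d i j ^ 2 = ∑ i, d i ^ 2 := by
  simp [diagonal_apply, apply_ite (· ^ 2)]

lemma sum_sq_diag_le (A : Matrix (Fin n) (Fin n) ℝ) : ∑ i, A i i ^ 2 ≤ ∑ i, ∑ j, A i j ^ 2 :=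
  sum_le_sum fun i _ => single_le_sum (f := fun j => A i j ^ 2) (fun _ _ => sq_nonneg _)
    (mem_univ i)

lemma exists_unitary_eq_conj_eigsDesc {X : Matrix (Fin n) (Fin n) ℝ} (hX : X.IsHermitian) :
    ∃ W ∈ unitaryGroup (Fin n) ℝ, X = W * diagonal (eigsDesc X) * star W := by
  obtain ⟨σ, hσ⟩ := exists_perm_sortDesc hX.eigenvalues
  set U : Matrix (Fin n) (Fin n) ℝ := (hX.eigenvectorUnitary : Matrix (Fin n) (Fin n) ℝ)
  have hU : U ∈ unitaryGroup (Fin n) ℝ := hX.eigenvectorUnitary.2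
  refine ⟨U.submatrix id σ, ?_, ?_⟩
  · rw [mem_unitaryGroup_iff, star_eq_conjTranspose, conjTranspose_submatrix,
      submatrix_mul_equiv, ← star_eq_conjTranspose, mem_unitaryGroup_iff.mp hU]
    exact submatrix_one_equiv (Equiv.refl _)
  · rw [eigsDesc, dif_pos hX, hσ, ← submatrix_diagonal_equiv, star_eq_conjTranspose,
      conjTranspose_submatrix, submatrix_mul_equiv, submatrix_mul_equiv, submatrix_id_id,
      ← star_eq_conjTranspose]
    simpa [Unitary.conjStarAlgAut_apply] using hX.spectral_theorem

lemma charpoly_conj_unitary {W : Matrix (Fin n) (Fin n) ℝ} (hW : W ∈ unitaryGroup (Fin n) ℝ)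
    (A : Matrix (Fin n) (Fin n) ℝ) : (W * A * star W).charpoly = A.charpoly := by
  rw [charpoly_mul_comm, ← mul_assoc, mem_unitaryGroup_iff'.mp hW, one_mul]

lemma eigsDesc_conj_diagonal {W : Matrix (Fin n) (Fin n) ℝ} (hW : W ∈ unitaryGroup (Fin n) ℝ)
    {d : Fin n → ℝ} (hd : Antitone d) : eigsDesc (W * diagonal d * star W) = d := by
  have hX : (W * diagonal d * star W).IsHermitian :=
    isHermitian_mul_mul_conjTranspose W (isHermitian_diagonal d)
  rw [eigsDesc, dif_pos hX]
  refine sortDesc_eq_of_perm ?_ hd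
  rw [← Multiset.coe_eq_coe, ← Fin.univ_val_map, ← Fin.univ_val_map]
  have := hX.roots_charpoly_eq_eigenvalues
  rw [charpoly_conj_unitary hW, charpoly_diagonal, Polynomial.roots_prod] at this
  · simpa using this.symm
  · exact prod_ne_zero_iff.mpr fun i _ => Polynomial.X_sub_C_ne_zero (d i)

lemma hadamard_self_mem_doublyStochastic {M : Matrix (Fin n) (Fin n) ℝ}
    (hM : M ∈ unitaryGroup (Fin n) ℝ) : M ⊙ M ∈ doublyStochastic ℝ (Fin n) := by
  refine mem_doublyStochastic_iff_sum.mpr ⟨fun i j => mul_self_nonneg _, fun i => ?_, fun j => ?_⟩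
  · simpa [mul_apply] using congrFun₂ (mem_unitaryGroup_iff.mp hM) i i
  · simpa [mul_apply] using congrFun₂ (mem_unitaryGroup_iff'.mp hM) j j

lemma conj_diagonal_apply_self (M : Matrix (Fin n) (Fin n) ℝ) (d : Fin n → ℝ) (i : Fin n) :
    (M * diagonal d * star M) i i = (M ⊙ M *ᵥ d) i := by
  rw [mul_apply]
  simp only [mul_diagonal, star_apply, star_trivial, mulVec, dotProduct, hadamard_apply]
  exact sum_congr rfl fun j _ => by ring

-- `vecCone S f` and `matCone S f` are, by definition, the closures of these two sets.
def perspEpi (S : Set (Fin n → ℝ)) (f : (Fin n → ℝ) → ℝ) : Set (ℝ × ℝ × (Fin n → ℝ)) :=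
  {p | 0 < p.2.1 ∧ p.2.1⁻¹ • p.2.2 ∈ S ∧ p.2.1 * f (p.2.1⁻¹ • p.2.2) ≤ p.1}

noncomputable def spectralPerspEpi (S : Set (Fin n → ℝ)) (f : (Fin n → ℝ) → ℝ) :
    Set (ℝ × ℝ × Matrix (Fin n) (Fin n) ℝ) :=
  {p | p.2.2.IsHermitian ∧ 0 < p.2.1 ∧ p.2.1⁻¹ • eigsDesc p.2.2 ∈ S ∧
    p.2.1 * f (p.2.1⁻¹ • eigsDesc p.2.2) ≤ p.1}

def IsSymmetricOn (S : Set (Fin n → ℝ)) (f : (Fin n → ℝ) → ℝ) : Prop :=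
  ∀ (e : Equiv.Perm (Fin n)) (x : Fin n → ℝ), x ∈ S → (x ∘ ⇑e) ∈ S ∧ f (x ∘ ⇑e) = f x

section Symmetric

variable {S : Set (Fin n → ℝ)} {f : (Fin n → ℝ) → ℝ}

lemma conj_sortDesc_mem_spectralPerspEpi (hsymm : IsSymmetricOn S f)
    {W : Matrix (Fin n) (Fin n) ℝ} (hW : W ∈ unitaryGroup (Fin n) ℝ) {t v : ℝ} {x : Fin n → ℝ}
    (hp : (t, v, x) ∈ perspEpi S f) :
    (t, v, W * diagonal (sortDesc x) * star W) ∈ spectralPerspEpi S f := by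
  obtain ⟨hv, hxS, hft⟩ := hp
  obtain ⟨σ, hσ⟩ := exists_perm_sortDesc x
  have hperm : v⁻¹ • sortDesc x = (v⁻¹ • x) ∘ σ := by rw [hσ]; rfl
  refine ⟨isHermitian_mul_mul_conjTranspose W (isHermitian_diagonal _), hv, ?_, ?_⟩ <;>
    dsimp only <;> rw [eigsDesc_conj_diagonal hW (antitone_sortDesc x), hperm]
  exacts [(hsymm σ _ hxS).1, (hsymm σ _ hxS).2 ▸ hft]

lemma mulVec_mem_and_le_of_mem_doublyStochastic (hsymm : IsSymmetricOn S f)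
    (hconv : ConvexOn ℝ S f) {z : Fin n → ℝ} (hz : z ∈ S)
    {Q : Matrix (Fin n) (Fin n) ℝ} (hQ : Q ∈ doublyStochastic ℝ (Fin n)) :
    Q *ᵥ z ∈ S ∧ f (Q *ᵥ z) ≤ f z := by
  have hlin : IsLinearMap ℝ fun M : Matrix (Fin n) (Fin n) ℝ => M *ᵥ z :=
    ⟨fun M N => add_mulVec M N z, fun c M => smul_mulVec c M z⟩
  have hQ' : Q ∈ convexHull ℝ {σ.permMatrix ℝ | σ : Equiv.Perm (Fin n)} := by
    rwa [← doublyStochastic_eq_convexHull_permMatrix]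
  refine convexHull_min ?_ ((hconv.convex_le (f z)).is_linear_preimage hlin) hQ'
  rintro _ ⟨σ, rfl⟩
  simp only [Set.mem_preimage, permMatrix_mulVec]
  exact ⟨(hsymm σ z hz).1, (hsymm σ z hz).2.le⟩

lemma mulVec_eigsDesc_mem_perspEpi (hsymm : IsSymmetricOn S f) (hconv : ConvexOn ℝ S f)
    {Q : Matrix (Fin n) (Fin n) ℝ} (hQ : Q ∈ doublyStochastic ℝ (Fin n)) {t v : ℝ}
    {X : Matrix (Fin n) (Fin n) ℝ} (hp : (t, v, X) ∈ spectralPerspEpi S f) :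
    (t, v, Q *ᵥ eigsDesc X) ∈ perspEpi S f := by
  obtain ⟨-, hv, hzS, hft⟩ := hp
  obtain ⟨hQS, hQf⟩ := mulVec_mem_and_le_of_mem_doublyStochastic hsymm hconv hzS hQ
  refine ⟨hv, ?_, ?_⟩ <;> dsimp only <;> rw [← mulVec_smul]
  exacts [hQS, (mul_le_mul_of_nonneg_left hQf hv.le).trans hft]

end Symmetric

lemma sum_sq_conj_sortDesc_sub_le {W B : Matrix (Fin n) (Fin n) ℝ}
    (hW : W ∈ unitaryGroup (Fin n) ℝ) {b : Fin n → ℝ} (hb : Antitone b)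
    (hB : B = W * diagonal b * star W) (x : Fin n → ℝ) :
    ∑ i, ∑ j, ((W * diagonal (sortDesc x) * star W) i j - B i j) ^ 2 ≤ ∑ i, (x i - b i) ^ 2 := by
  subst hB
  have hsub : W * diagonal (sortDesc x) * star W - W * diagonal b * star W =
      W * diagonal (sortDesc x - b) * star W := by
    rw [← Matrix.sub_mul, ← Matrix.mul_sub, diagonal_sub]
    rfl
  calc _ = ∑ i, ∑ j, (W * diagonal (sortDesc x - b) * star W) i j ^ 2 := by rw [← hsub]; rfl
    _ = ∑ i, (sortDesc x i - b i) ^ 2 := by rw [sum_sq_conj_unitary hW, sum_sq_diagonal]; rfl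
    _ ≤ _ := sum_sq_sortDesc_sub_le x hb

lemma sum_sq_hadamard_mulVec_sub_le {A B U W : Matrix (Fin n) (Fin n) ℝ}
    (hW : W ∈ unitaryGroup (Fin n) ℝ) {a b : Fin n → ℝ} (hA : A = U * diagonal a * star U)
    (hB : B = W * diagonal b * star W) :
    ∑ i, (((star W * U) ⊙ (star W * U) *ᵥ a) i - b i) ^ 2 ≤ ∑ i, ∑ j, (A i j - B i j) ^ 2 := by
  subst hA hB
  set D := U * diagonal a * star U - W * diagonal b * star W
  have hdiag : star W * D * star (star W) =
      star W * U * diagonal a * star (star W * U) - diagonal b := by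
    simp only [D, star_mul, star_star, Matrix.mul_sub, Matrix.sub_mul, Matrix.mul_assoc,
      mem_unitaryGroup_iff'.mp hW, Matrix.mul_one]
    rw [← Matrix.mul_assoc (star W) W, mem_unitaryGroup_iff'.mp hW, Matrix.one_mul]
  calc _ = ∑ i, (star W * D * star (star W)) i i ^ 2 := by
        simp only [hdiag, Matrix.sub_apply, conj_diagonal_apply_self, diagonal_apply_eq]
    _ ≤ ∑ i, ∑ j, (star W * D * star (star W)) i j ^ 2 := sum_sq_diag_le _
    _ = ∑ i, ∑ j, D i j ^ 2 := sum_sq_conj_unitary (Unitary.star_mem hW) D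

theorem stmt3_general {n : ℕ} (S : Set (Fin n → ℝ)) (f : (Fin n → ℝ) → ℝ)
    (hconv : ConvexOn ℝ S f)
    (hsymm : ∀ (e : Equiv.Perm (Fin n)) (x : Fin n → ℝ), x ∈ S →
      (x ∘ ⇑e) ∈ S ∧ f (x ∘ ⇑e) = f x)
    (tb vb : ℝ) (Xb : Matrix (Fin n) (Fin n) ℝ) (hXb : Xb.IsHermitian) :
    sInf {r : ℝ | ∃ p ∈ matCone S f,
        r = Real.sqrt ((p.1 - tb) ^ 2 + (p.2.1 - vb) ^ 2 +
              ∑ i, ∑ j, (p.2.2 i j - Xb i j) ^ 2)} =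
    sInf {r : ℝ | ∃ p ∈ vecCone S f,
        r = Real.sqrt ((p.1 - tb) ^ 2 + (p.2.1 - vb) ^ 2 +
              ∑ i, (p.2.2 i - eigsDesc Xb i) ^ 2)} := by
  obtain ⟨W, hW, hXbW⟩ := exists_unitary_eq_conj_eigsDesc hXb
  refine csInf_closure_eq_of_forall_exists_le (A := spectralPerspEpi S f) (B := perspEpi S f)
    (by fun_prop) (by fun_prop) ⟨0, Set.forall_mem_range.mpr fun _ => Real.sqrt_nonneg _⟩
    ⟨0, Set.forall_mem_range.mpr fun _ => Real.sqrt_nonneg _⟩ ?_ ?_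
  · rintro ⟨t, v, X⟩ hp
    obtain ⟨U, hU, hXU⟩ := exists_unitary_eq_conj_eigsDesc hp.1
    refine ⟨_, mulVec_eigsDesc_mem_perspEpi hsymm hconv
      (hadamard_self_mem_doublyStochastic (mul_mem (Unitary.star_mem hW) hU)) hp, ?_⟩
    gcongr √(_ + _ + ?_)
    exact sum_sq_hadamard_mulVec_sub_le hW hXU hXbW
  · rintro ⟨t, v, x⟩ hp
    refine ⟨_, conj_sortDesc_mem_spectralPerspEpi hsymm hW hp, ?_⟩
    gcongr √(_ + _ + ?_)
    exact sum_sq_conj_sortDesc_sub_le hW (antitone_eigsDesc Xb) hXbW x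

/-- For a proper convex symmetric function `f` (value `f` on its
domain `S`, `+∞` outside), the Euclidean distance from `(tb, vb, Xb)` to the spectral
matrix cone `K_F` equals the Euclidean distance from `(tb, vb, λ(Xb))` to the spectral
vector cone `K_f`, where `λ(Xb)` is the vector of eigenvalues of the symmetric matrix
`Xb` in nonincreasing order. -/
theorem stmt3 {n : ℕ} (S : Set (Fin n → ℝ)) (f : (Fin n → ℝ) → ℝ)
    (hproper : S.Nonempty) (hconv : ConvexOn ℝ S f)
    (hsymm : ∀ (e : Equiv.Perm (Fin n)) (x : Fin n → ℝ), x ∈ S →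
      (x ∘ ⇑e) ∈ S ∧ f (x ∘ ⇑e) = f x)
    (tb vb : ℝ) (Xb : Matrix (Fin n) (Fin n) ℝ) (hXb : Xb.IsHermitian) :
    sInf {r : ℝ | ∃ p ∈ matCone S f,
        r = Real.sqrt ((p.1 - tb) ^ 2 + (p.2.1 - vb) ^ 2 +
              ∑ i, ∑ j, (p.2.2 i j - Xb i j) ^ 2)} =
    sInf {r : ℝ | ∃ p ∈ vecCone S f,
        r = Real.sqrt ((p.1 - tb) ^ 2 + (p.2.1 - vb) ^ 2 +
              ∑ i, (p.2.2 i - eigsDesc Xb i) ^ 2)} :=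
  stmt3_general S f hconv hsymm tb vb Xb hXb
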